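/- arXiv:2502.19753 — 3 statements merged into one kernel-verified Lean document; each statement's English description precedes it below -/
import Mathlib

section
/- Let n ≥ 4 be an integer with n ≡ 0 (mod 4) and n ≢ 0 (mod 8), m a positive integer, and C a code of length m over 𝔽₄. Then: (1) Γ_C is integral if and only if C ⊆ C̄^⊥; (2) Γ_C is unimodular if and only if C is Hermitian self-dual; (3) Γ_C is even if and only if 2 divides wt_H(w) for every w ∈ C; (4) Γ_C is even unimodular if and only if C is Hermitian self-dual. -/
open Finset

/-- The field with four elements. -/
abbrev F4 : Type := GaloisField 2 2

/-- The bilinear form of `m` copies of the dual `D_n` root lattice (`n` even),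
written in the dual basis: `B(x,y) = Σ_i Σ_j Σ_s (1/4)(n − 2|j−s|) x_{ij} y_{is}`. -/
noncomputable def BDev (n m : ℕ) (x y : Fin m → Fin n → ℚ) : ℚ :=
  ∑ i, ∑ j : Fin n, ∑ s : Fin n,
    (1 / 4) * ((n : ℚ) - 2 * |((j : ℕ) : ℚ) - ((s : ℕ) : ℚ)|) * x i j * y i s

/-- `a_i(x)`: the sum of the odd-numbered (`1`-indexed) coordinates, mod 2. -/
def aD (n m : ℕ) (x : Fin m → Fin n → ℤ) (i : Fin m) : ZMod 2 :=
  ((∑ j ∈ Finset.univ.filter (fun j : Fin n => (j : ℕ) % 2 = 0), x i j : ℤ) : ZMod 2)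

/-- `b_i(x)`: the sum of the even-numbered (`1`-indexed) coordinates, mod 2. -/
def bD (n m : ℕ) (x : Fin m → Fin n → ℤ) (i : Fin m) : ZMod 2 :=
  ((∑ j ∈ Finset.univ.filter (fun j : Fin n => (j : ℕ) % 2 = 1), x i j : ℤ) : ZMod 2)

/-- The reduction map `ρ` to `𝔽₄^m`, `ρ(x)_i = a_i ω + b_i ω²`,
relative to a chosen generator `ω` of `𝔽₄`. -/
noncomputable def rhoF4 (ω : F4) (n m : ℕ) (x : Fin m → Fin n → ℤ) :
    Fin m → F4 :=
  fun i => algebraMap (ZMod 2) F4 (aD n m x i) * ω +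
    algebraMap (ZMod 2) F4 (bD n m x i) * ω ^ 2

/-- Coordinatewise conjugation `x̄ = x²` on `𝔽₄^m`. -/
noncomputable def conjF4 (m : ℕ) (w : Fin m → F4) : Fin m → F4 :=
  fun i => (w i) ^ 2

open scoped Classical in
/-- `N₀`: the number of coordinates equal to `0`. -/
noncomputable def N0F (m : ℕ) (w : Fin m → F4) : ℕ :=
  (Finset.univ.filter (fun i => w i = 0)).card

open scoped Classical in
/-- `N₂`: the number of coordinates equal to `1`. -/
noncomputable def N2F (m : ℕ) (w : Fin m → F4) : ℕ :=
  (Finset.univ.filter (fun i => w i = 1)).card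

/-- `N₁ = m − N₀ − N₂`. -/
noncomputable def N1F (m : ℕ) (w : Fin m → F4) : ℕ :=
  m - N0F m w - N2F m w

/-- The Lee weight `wt_L = N₁ + 2N₂`. -/
noncomputable def wtLF (m : ℕ) (w : Fin m → F4) : ℕ :=
  N1F m w + 2 * N2F m w

/-- The Hamming weight `wt_H = N₁ + N₂`. -/
noncomputable def wtHF (m : ℕ) (w : Fin m → F4) : ℕ :=
  N1F m w + N2F m w

/-- The dual code of a set of codewords over `𝔽₄`. -/
def dualCodeF4 (m : ℕ) (C : Set (Fin m → F4)) : Set (Fin m → F4) :=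
  {w | ∀ v ∈ C, ∑ i, w i * v i = 0}

/-- The lattice `Γ_C` constructed from the code `C`. -/
def GammaF4 (ω : F4) (n m : ℕ) (C : Set (Fin m → F4)) :
    Set (Fin m → Fin n → ℤ) :=
  {x | rhoF4 ω n m x ∈ C}

/-- Coercion of an integral vector to a rational vector. -/
def toQD (n m : ℕ) (x : Fin m → Fin n → ℤ) : Fin m → Fin n → ℚ :=
  fun i j => (x i j : ℚ)

/-- The dual lattice `Γ_C^*`, taken inside the `ℚ`-valued vectors. -/
noncomputable def dualLatticeF4 (ω : F4) (n m : ℕ) (C : Set (Fin m → F4)) :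
    Set (Fin m → Fin n → ℚ) :=
  {z | ∀ y ∈ GammaF4 ω n m C, ∃ k : ℤ, (k : ℚ) = BDev n m z (toQD n m y)}

/-- `Γ_C` is integral. -/
def IsIntegralF4 (ω : F4) (n m : ℕ) (C : Set (Fin m → F4)) : Prop :=
  ∀ x ∈ GammaF4 ω n m C, ∀ y ∈ GammaF4 ω n m C,
    ∃ k : ℤ, (k : ℚ) = BDev n m (toQD n m x) (toQD n m y)

/-- `Γ_C` is even. -/
def IsEvenLatF4 (ω : F4) (n m : ℕ) (C : Set (Fin m → F4)) : Prop :=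
  IsIntegralF4 ω n m C ∧ ∀ x ∈ GammaF4 ω n m C,
    ∃ k : ℤ, ((2 * k : ℤ) : ℚ) = BDev n m (toQD n m x) (toQD n m x)

/-- `Γ_C` is unimodular. -/
def IsUnimodularF4 (ω : F4) (n m : ℕ) (C : Set (Fin m → F4)) : Prop :=
  dualLatticeF4 ω n m C = toQD n m '' GammaF4 ω n m C

/-- A code over `𝔽₄` is Hermitian self-dual if `C = C̄^⊥`. -/
def IsHermitianSelfDualF4 (m : ℕ) (C : Set (Fin m → F4)) : Prop :=
  C = dualCodeF4 m (conjF4 m '' C)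

/-!
Let `α, β : 𝔽₄ → 𝔽₂` be the coordinates in the `𝔽₂`-basis `ω, ω²`, so that `α(ρ(x)_i) = a_i(x)`
and `β(ρ(x)_i) = b_i(x)`, and let `σ(v, w) = Σ_i (α(v_i) β(w_i) + α(w_i) β(v_i))`.

For `n = 4k`, `2 B(x, y) = Σ_i Σ_{j,s} (2k - |j - s|) x_{ij} y_{is}` is an integer, congruent to
`σ(ρx, ρy)` mod 2 because `|j - s| ≡ j + s`. Using `|j - s| = j + s - 2 min(j, s)`, `B(x, x)` is an
integer as well, and for odd `k` it is congruent to `Σ_i (a_i + b_i + a_i b_i) ≡ wt_H(ρx)`.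

On the code side `Σ_i v_i w̄_i = σ(v, ωw) + σ(v, w) ω`, so for an `𝔽₄`-linear code Hermitian
orthogonality is `σ`-orthogonality, and `wt_H(v) ≡ σ(v, ωv)` vanishes on Hermitian
self-orthogonal codes. Finally `Γ_C^*` consists of integral vectors: each coordinate of `z` is
`B(z, y)` for a column `y` of the inverse Gram matrix, and these columns lie in `ker ρ ⊆ Γ_C`.
Hence `Γ_C^* = ρ⁻¹(C̄^⊥)`, and all four statements follow from the surjectivity of `ρ`.
-/

theorem CharTwo.sum_sum_eq_sum_diag {R ι : Type*} [CommRing R] [CharP R 2] [DecidableEq ι]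
    (s : Finset ι) (g : ι → ι → R) (hg : ∀ i j, g i j = g j i) :
    ∑ i ∈ s, ∑ j ∈ s, g i j = ∑ i ∈ s, g i i := by
  induction s using Finset.induction_on with
  | empty => simp
  | insert a s ha ih =>
    have hsymm : ∑ i ∈ s, g i a = ∑ j ∈ s, g a j := Finset.sum_congr rfl fun i _ => hg i a
    simp only [Finset.sum_insert ha, Finset.sum_add_distrib, ih, hsymm]
    linear_combination CharTwo.add_self_eq_zero (∑ j ∈ s, g a j)

theorem exists_intCast_eq_iff_of_two_mul_eq {q : ℚ} {N : ℤ} (h : 2 * q = N) :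
    (∃ l : ℤ, (l : ℚ) = q) ↔ (N : ZMod 2) = 0 := by
  rw [ZMod.intCast_eq_zero_iff_even]
  constructor
  · rintro ⟨l, rfl⟩
    exact ⟨l, by exact_mod_cast h.symm.trans (two_mul _)⟩
  · rintro ⟨l, rfl⟩
    exact ⟨l, by push_cast at h; linarith⟩

theorem exists_two_mul_eq_iff_of_eq {q : ℚ} {N : ℤ} (h : q = N) :
    (∃ l : ℤ, ((2 * l : ℤ) : ℚ) = q) ↔ (N : ZMod 2) = 0 := by
  simp only [h, Int.cast_inj, ZMod.intCast_eq_zero_iff_even, even_iff_two_dvd, dvd_def, eq_comm]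

open scoped Classical in
theorem wtHF_eq_card {m : ℕ} (v : Fin m → F4) : wtHF m v = #{i | v i ≠ 0} := by
  have hcompl : #{i | v i = 0} + #{i | v i ≠ 0} = m := by
    rw [Finset.card_filter_add_card_filter_not, Finset.card_univ, Fintype.card_fin]
  have hone : #{i | v i = 1} ≤ #{i | v i ≠ 0} :=
    Finset.card_le_card fun i => by simp +contextual
  simp only [wtHF, N1F, N0F, N2F]
  omega

section Coordinates

variable {ω : F4} (hω : ω ^ 2 = ω + 1)
include hω

theorem omega_pow_three : ω ^ 3 = 1 := by
  linear_combination (ω + 1) * hω + ω * CharTwo.two_eq_zero (R := F4)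

theorem linearIndependent_omega : LinearIndependent (ZMod 2) ![ω, ω ^ 2] := by
  rw [LinearIndependent.pair_iff]
  have hsum : ω + ω ^ 2 = 1 := by linear_combination hω + ω * CharTwo.two_eq_zero (R := F4)
  have hω0 : ω ≠ 0 := by rintro rfl; simp at hω
  have hcases : ∀ c : ZMod 2, c = 0 ∨ c = 1 := by decide
  intro s t hst
  rcases hcases s with rfl | rfl <;> rcases hcases t with rfl | rfl <;> simp_all

noncomputable def omegaBasis : Module.Basis (Fin 2) (ZMod 2) F4 :=
  basisOfLinearIndependentOfCardEqFinrank (linearIndependent_omega hω)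
    (by simp [GaloisField.finrank 2 two_ne_zero])

noncomputable def omegaCoord (k : Fin 2) : F4 →ₗ[ZMod 2] ZMod 2 := (omegaBasis hω).coord k

theorem omegaCoord_smul_add_smul (a b : ZMod 2) :
    omegaCoord hω 0 (a • ω + b • ω ^ 2) = a ∧ omegaCoord hω 1 (a • ω + b • ω ^ 2) = b := by
  have h0 : omegaBasis hω 0 = ω := by simp [omegaBasis]
  have h1 : omegaBasis hω 1 = ω ^ 2 := by simp [omegaBasis]
  have h : a • ω + b • ω ^ 2 = (omegaBasis hω).equivFun.symm ![a, b] := by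
    simp [Module.Basis.equivFun_symm_apply, Fin.sum_univ_two, h0, h1]
  simp only [h, omegaCoord, Module.Basis.coord_apply, ← Module.Basis.equivFun_apply,
    LinearEquiv.apply_symm_apply]
  simp

theorem smul_add_smul_omegaCoord (v : F4) :
    omegaCoord hω 0 v • ω + omegaCoord hω 1 v • ω ^ 2 = v := by
  have h := (omegaBasis hω).sum_repr v
  simpa [omegaBasis, omegaCoord, Fin.sum_univ_two] using h

theorem eq_zero_iff_omegaCoord (v : F4) :
    v = 0 ↔ omegaCoord hω 0 v = 0 ∧ omegaCoord hω 1 v = 0 := by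
  constructor
  · rintro rfl; simp
  · rintro ⟨h0, h1⟩
    rw [← smul_add_smul_omegaCoord hω v, h0, h1, zero_smul, zero_smul, add_zero]

theorem omegaCoord_omega_mul (v : F4) :
    omegaCoord hω 0 (ω * v) = omegaCoord hω 1 v ∧
      omegaCoord hω 1 (ω * v) = omegaCoord hω 0 v + omegaCoord hω 1 v := by
  set a := omegaCoord hω 0 v
  set b := omegaCoord hω 1 v
  have h : ω * v = b • ω + (a + b) • ω ^ 2 := by
    rw [← smul_add_smul_omegaCoord hω v]
    simp only [Algebra.smul_def, map_add]
    linear_combination (algebraMap (ZMod 2) F4 b) * (omega_pow_three hω - hω) -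
      algebraMap (ZMod 2) F4 b * ω * CharTwo.two_eq_zero (R := F4)
  rw [h]
  exact omegaCoord_smul_add_smul hω _ _

theorem algebraMap_add_algebraMap_mul_omega_eq_zero_iff (p q : ZMod 2) :
    algebraMap (ZMod 2) F4 p + algebraMap (ZMod 2) F4 q * ω = 0 ↔ p = 0 ∧ q = 0 := by
  have h : algebraMap (ZMod 2) F4 p + algebraMap (ZMod 2) F4 q * ω = (p + q) • ω + p • ω ^ 2 := by
    simp only [Algebra.smul_def, map_add]
    linear_combination (-algebraMap (ZMod 2) F4 p) * hω -
      algebraMap (ZMod 2) F4 p * ω * CharTwo.two_eq_zero (R := F4)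
  rw [h, eq_zero_iff_omegaCoord hω, (omegaCoord_smul_add_smul hω _ _).1,
    (omegaCoord_smul_add_smul hω _ _).2]
  constructor
  · rintro ⟨hpq, rfl⟩; simpa using hpq
  · rintro ⟨rfl, rfl⟩; simp

theorem mul_sq_eq (v w : F4) :
    v * w ^ 2 =
      algebraMap (ZMod 2) F4 (omegaCoord hω 0 v * (omegaCoord hω 0 w + omegaCoord hω 1 w) +
          omegaCoord hω 1 w * omegaCoord hω 1 v) +
        algebraMap (ZMod 2) F4 (omegaCoord hω 0 v * omegaCoord hω 1 w +
          omegaCoord hω 0 w * omegaCoord hω 1 v) * ω := by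
  conv_lhs => rw [← smul_add_smul_omegaCoord hω v, ← smul_add_smul_omegaCoord hω w]
  set a := omegaCoord hω 0 v
  set b := omegaCoord hω 1 v
  set c := omegaCoord hω 0 w
  set d := omegaCoord hω 1 w
  have hidem (e : ZMod 2) : algebraMap (ZMod 2) F4 e ^ 2 = algebraMap (ZMod 2) F4 e := by
    rw [← map_pow, ZMod.pow_card]
  have h3 := omega_pow_three hω
  simp only [Algebra.smul_def, map_add, map_mul]
  set A := algebraMap (ZMod 2) F4 a
  set B := algebraMap (ZMod 2) F4 b
  set C := algebraMap (ZMod 2) F4 c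
  set D := algebraMap (ZMod 2) F4 d
  linear_combination (A * ω + B * ω ^ 2) *
      (ω ^ 2 * hidem c + C * D * ω ^ 3 * CharTwo.two_eq_zero (R := F4) + ω ^ 4 * hidem d +
        D * ω * h3) +
    (A * C + B * D + B * C * ω) * h3 + A * D * hω

variable {m : ℕ}

noncomputable def sympF4 (v w : Fin m → F4) : ZMod 2 :=
  ∑ i, (omegaCoord hω 0 (v i) * omegaCoord hω 1 (w i) +
    omegaCoord hω 0 (w i) * omegaCoord hω 1 (v i))

theorem sum_mul_sq_eq (v w : Fin m → F4) :
    ∑ i, v i * w i ^ 2 =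
      algebraMap (ZMod 2) F4 (sympF4 hω v (ω • w)) +
        algebraMap (ZMod 2) F4 (sympF4 hω v w) * ω := by
  rw [sympF4, sympF4, map_sum, map_sum, Finset.sum_mul, ← Finset.sum_add_distrib]
  refine Finset.sum_congr rfl fun i _ => ?_
  simp only [Pi.smul_apply, smul_eq_mul, omegaCoord_omega_mul hω, mul_sq_eq hω]

theorem sum_mul_sq_eq_zero_iff (v w : Fin m → F4) :
    ∑ i, v i * w i ^ 2 = 0 ↔ sympF4 hω v (ω • w) = 0 ∧ sympF4 hω v w = 0 := by
  rw [sum_mul_sq_eq hω, algebraMap_add_algebraMap_mul_omega_eq_zero_iff hω]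

theorem mem_dualCodeF4_conj_iff (C : Submodule F4 (Fin m → F4)) (v : Fin m → F4) :
    v ∈ dualCodeF4 m (conjF4 m '' C) ↔ ∀ w ∈ C, sympF4 hω v w = 0 := by
  simp only [dualCodeF4, Set.mem_ofPred_eq, Set.forall_mem_image, conjF4,
    sum_mul_sq_eq_zero_iff hω]
  exact ⟨fun h w hw => (h hw).2, fun h w hw => ⟨h _ (C.smul_mem ω hw), h w hw⟩⟩

theorem natCast_wtHF (v : Fin m → F4) :
    (wtHF m v : ZMod 2) = ∑ i, (omegaCoord hω 0 (v i) + omegaCoord hω 1 (v i) +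
      omegaCoord hω 0 (v i) * omegaCoord hω 1 (v i)) := by
  classical
  rw [wtHF_eq_card, Finset.card_filter, Nat.cast_sum]
  refine Finset.sum_congr rfl fun i _ => ?_
  simp only [ne_eq, eq_zero_iff_omegaCoord hω]
  generalize omegaCoord hω 0 (v i) = a
  generalize omegaCoord hω 1 (v i) = b
  revert a b
  decide

theorem sympF4_smul_self (v : Fin m → F4) : sympF4 hω v (ω • v) = wtHF m v := by
  rw [natCast_wtHF hω, sympF4]
  refine Finset.sum_congr rfl fun i _ => ?_
  simp only [Pi.smul_apply, smul_eq_mul, omegaCoord_omega_mul hω]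
  generalize omegaCoord hω 0 (v i) = a
  generalize omegaCoord hω 1 (v i) = b
  revert a b
  decide

theorem natCast_wtHF_add (v w : Fin m → F4) :
    (wtHF m (v + w) : ZMod 2) = wtHF m v + wtHF m w + sympF4 hω v w := by
  simp only [natCast_wtHF hω, sympF4, Pi.add_apply, map_add, ← Finset.sum_add_distrib]
  refine Finset.sum_congr rfl fun i _ => ?_
  ring

end Coordinates

section GramForm

variable {n m : ℕ}

theorem sum_intCast_eq_aD_add_bD (x : Fin m → Fin n → ℤ) (i : Fin m) :
    ∑ j, (x i j : ZMod 2) = aD n m x i + bD n m x i := by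
  rw [aD, bD, Int.cast_sum, Int.cast_sum,
    ← Finset.sum_filter_add_sum_filter_not _ (fun j : Fin n => (j : ℕ) % 2 = 0)]
  simp only [Nat.mod_two_ne_zero]

theorem sum_natCast_mul_intCast_eq_bD (x : Fin m → Fin n → ℤ) (i : Fin m) :
    ∑ j : Fin n, ((j : ℕ) : ZMod 2) * (x i j : ZMod 2) = bD n m x i := by
  rw [bD, Int.cast_sum, Finset.sum_filter]
  refine Finset.sum_congr rfl fun j _ => ?_
  rw [← ZMod.natCast_mod]
  rcases Nat.mod_two_eq_zero_or_one j with h | h <;> simp [h]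

def twiceBDevInt (k : ℕ) (x y : Fin m → Fin n → ℤ) : ℤ :=
  ∑ i, ∑ j : Fin n, ∑ s : Fin n, (2 * k - |(j : ℤ) - s|) * x i j * y i s

def normBDevInt (k : ℕ) (x : Fin m → Fin n → ℤ) : ℤ :=
  ∑ i, (k * (∑ j, x i j) ^ 2 - (∑ j : Fin n, (j : ℤ) * x i j) * ∑ j, x i j +
    ∑ j : Fin n, ∑ s : Fin n, min (j : ℤ) s * x i j * x i s)

theorem two_mul_BDev_toQD (k : ℕ) (x y : Fin m → Fin (4 * k) → ℤ) :
    2 * BDev (4 * k) m (toQD _ m x) (toQD _ m y) = twiceBDevInt k x y := by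
  simp only [BDev, toQD, twiceBDevInt, Finset.mul_sum]
  push_cast
  refine Finset.sum_congr rfl fun i _ => Finset.sum_congr rfl fun j _ =>
    Finset.sum_congr rfl fun s _ => ?_
  ring

theorem twiceBDevInt_self (k : ℕ) (x : Fin m → Fin n → ℤ) :
    twiceBDevInt k x x = 2 * normBDevInt k x := by
  have habs (a b : ℤ) : |a - b| = a + b - 2 * min a b := by
    rcases le_total a b with h | h
    · rw [abs_of_nonpos (by linarith), min_eq_left h]; ring
    · rw [abs_of_nonneg (by linarith), min_eq_right h]; ring
  rw [twiceBDevInt, normBDevInt, Finset.mul_sum]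
  refine Finset.sum_congr rfl fun i _ => ?_
  calc ∑ j : Fin n, ∑ s : Fin n, (2 * k - |(j : ℤ) - s|) * x i j * x i s
      = ∑ j : Fin n, ∑ s : Fin n, (2 * k * (x i j * x i s) - (j * x i j) * x i s -
          x i j * (s * x i s) + 2 * (min (j : ℤ) s * x i j * x i s)) := by
        refine Finset.sum_congr rfl fun j _ => Finset.sum_congr rfl fun s _ => ?_
        rw [habs]
        ring
    _ = _ := by
        simp only [Finset.sum_add_distrib, Finset.sum_sub_distrib, ← Finset.mul_sum,
          ← Finset.sum_mul]
        ring

theorem BDev_toQD_self (k : ℕ) (x : Fin m → Fin (4 * k) → ℤ) :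
    BDev (4 * k) m (toQD _ m x) (toQD _ m x) = normBDevInt k x := by
  have h := two_mul_BDev_toQD k x x
  rw [twiceBDevInt_self, Int.cast_mul, Int.cast_two] at h
  exact mul_left_cancel₀ two_ne_zero h

theorem intCast_twiceBDevInt (k : ℕ) (x y : Fin m → Fin n → ℤ) :
    (twiceBDevInt k x y : ZMod 2) = ∑ i, (aD n m x i * bD n m y i + aD n m y i * bD n m x i) := by
  have hker (j s : ℕ) : ((2 * k - |(j : ℤ) - s| : ℤ) : ZMod 2) = j + s := by
    rcases abs_choice ((j : ℤ) - s) with h | h <;> push_cast [h]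
    · linear_combination ((k : ZMod 2) - j) * CharTwo.two_eq_zero (R := ZMod 2)
    · linear_combination ((k : ZMod 2) - s) * CharTwo.two_eq_zero (R := ZMod 2)
  rw [twiceBDevInt, Int.cast_sum]
  refine Finset.sum_congr rfl fun i _ => ?_
  push_cast [hker]
  calc ∑ j : Fin n, ∑ s : Fin n,
        (((j : ℕ) : ZMod 2) + ((s : ℕ) : ZMod 2)) * (x i j : ZMod 2) * y i s
      = (∑ j : Fin n, ((j : ℕ) : ZMod 2) * (x i j : ZMod 2)) * ∑ s, (y i s : ZMod 2) +
          (∑ j, (x i j : ZMod 2)) * ∑ s : Fin n, ((s : ℕ) : ZMod 2) * (y i s : ZMod 2) := by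
        simp only [Finset.sum_mul_sum, ← Finset.sum_add_distrib]
        refine Finset.sum_congr rfl fun j _ => Finset.sum_congr rfl fun s _ => ?_
        ring
    _ = _ := by
        rw [sum_natCast_mul_intCast_eq_bD, sum_natCast_mul_intCast_eq_bD,
          sum_intCast_eq_aD_add_bD, sum_intCast_eq_aD_add_bD]
        linear_combination (bD n m x i * bD n m y i) * CharTwo.two_eq_zero (R := ZMod 2)

theorem intCast_normBDevInt {k : ℕ} (hk : Odd k) (x : Fin m → Fin n → ℤ) :
    (normBDevInt k x : ZMod 2) =
      ∑ i, (aD n m x i + bD n m x i + aD n m x i * bD n m x i) := by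
  rw [normBDevInt, Int.cast_sum]
  refine Finset.sum_congr rfl fun i _ => ?_
  have hmin : ∑ j : Fin n, ∑ s : Fin n, ((min (j : ℤ) s * x i j * x i s : ℤ) : ZMod 2) =
      ∑ j : Fin n, ((j : ℕ) : ZMod 2) * (x i j : ZMod 2) := by
    rw [CharTwo.sum_sum_eq_sum_diag _ _ fun j s => by rw [min_comm, mul_right_comm]]
    refine Finset.sum_congr rfl fun j _ => ?_
    push_cast [min_self, mul_assoc, ← sq, ZMod.pow_card]
    rfl
  push_cast [ZMod.natCast_eq_one_iff_odd.mpr hk] at hmin ⊢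
  rw [hmin, sum_natCast_mul_intCast_eq_bD, sum_intCast_eq_aD_add_bD]
  generalize aD n m x i = a
  generalize bD n m x i = b
  revert a b
  decide

end GramForm

section Kernel
variable {n m : ℕ}

-- `2 e_s - e_p + ε e_q` is the `s`-th column of the inverse of the Gram matrix
-- `((n - 2|j - t|) / 4)`; `p ≡ q (mod 2)` puts it in `ker ρ`.
theorem exists_three_point_gram_identity (hn : Even n) {s : ℕ} (hs : s < n) :
    ∃ p < n, ∃ q < n, ∃ ε : ℤ, (ε = 1 ∨ ε = -1) ∧ p % 2 = q % 2 ∧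
      ∀ j < n, 2 * ((n : ℤ) - 2 * ((j : ℤ) - s).natAbs) - ((n : ℤ) - 2 * ((j : ℤ) - p).natAbs) +
        ε * ((n : ℤ) - 2 * ((j : ℤ) - q).natAbs) = if j = s then 4 else 0 := by
  obtain ⟨l, hl⟩ := hn
  by_cases h0 : s = 0
  · refine ⟨1, by omega, n - 1, by omega, 1, Or.inl rfl, by omega, fun j hj => ?_⟩
    split_ifs <;> omega
  by_cases hlast : s = n - 1
  · refine ⟨n - 2, by omega, 0, by omega, 1, Or.inl rfl, by omega, fun j hj => ?_⟩
    split_ifs <;> omega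
  · refine ⟨s - 1, by omega, s + 1, by omega, -1, Or.inr rfl, by omega, fun j hj => ?_⟩
    split_ifs <;> omega

theorem exists_gram_mul_eq_single (hn : Even n) (s : Fin n) :
    ∃ c : Fin n → ℤ,
      (∀ r, ((∑ j ∈ Finset.univ.filter (fun j : Fin n => (j : ℕ) % 2 = r), c j : ℤ) : ZMod 2) = 0) ∧
      ∀ j : Fin n, ∑ t : Fin n, (1 / 4) * ((n : ℚ) - 2 * |((j : ℕ) : ℚ) - ((t : ℕ) : ℚ)|) * c t =
        if j = s then 1 else 0 := by
  obtain ⟨p, hp, q, hq, ε, hε, hpq, hgram⟩ := exists_three_point_gram_identity hn s.isLt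
  set p' : Fin n := ⟨p, hp⟩
  set q' : Fin n := ⟨q, hq⟩
  refine ⟨fun t => 2 * (if t = s then 1 else 0) - (if t = p' then 1 else 0) +
    ε * (if t = q' then 1 else 0), fun r => ?_, fun j => ?_⟩
  · have hε2 : (ε : ZMod 2) = 1 := by rcases hε with rfl | rfl <;> rfl
    simp only [Finset.sum_add_distrib, Finset.sum_sub_distrib, ← Finset.mul_sum, Finset.sum_ite_eq']
    push_cast [hε2, CharTwo.two_eq_zero]
    simp [p', q', hpq, CharTwo.add_self_eq_zero]
  · have h := congrArg (Int.cast : ℤ → ℚ) (hgram j j.isLt)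
    push_cast [Nat.cast_natAbs, ← Fin.ext_iff] at h ⊢
    simp only [mul_add, mul_sub, mul_ite, mul_one, mul_zero, Finset.sum_add_distrib,
      Finset.sum_sub_distrib, Finset.sum_ite_eq', Finset.mem_univ, if_true]
    split_ifs at h ⊢ <;> linarith

theorem exists_rhoF4_eq_zero_BDev_eq (ω : F4) (hn : Even n) (i₀ : Fin m) (s : Fin n) :
    ∃ y : Fin m → Fin n → ℤ, rhoF4 ω n m y = 0 ∧ ∀ z, BDev n m z (toQD n m y) = z i₀ s := by
  classical
  obtain ⟨c, hpar, hgram⟩ := exists_gram_mul_eq_single hn s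
  refine ⟨Pi.single i₀ c, funext fun i => ?_, fun z => ?_⟩
  · by_cases hi : i = i₀
    · subst hi
      simp [rhoF4, aD, bD, hpar]
    · simp [rhoF4, aD, bD, hi]
  · rw [BDev, Finset.sum_eq_single i₀ (fun i _ hi => by simp [toQD, hi]) (by simp)]
    simp only [toQD, Pi.single_eq_same]
    calc ∑ j : Fin n, ∑ t : Fin n, 1 / 4 * ((n : ℚ) - 2 * |((j : ℕ) : ℚ) - ((t : ℕ) : ℚ)|) *
          z i₀ j * (c t : ℚ)
        = ∑ j : Fin n, z i₀ j * (if j = s then 1 else 0) := by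
          refine Finset.sum_congr rfl fun j _ => ?_
          rw [← hgram j, Finset.mul_sum]
          exact Finset.sum_congr rfl fun t _ => by ring
      _ = z i₀ s := by simp

theorem dualLatticeF4_subset_range_toQD {ω : F4} (hn : Even n) (C : Submodule F4 (Fin m → F4)) :
    dualLatticeF4 ω n m C ⊆ Set.range (toQD n m) := by
  intro z hz
  have hint (i : Fin m) (s : Fin n) : ∃ l : ℤ, (l : ℚ) = z i s := by
    obtain ⟨y, hy0, hyz⟩ := exists_rhoF4_eq_zero_BDev_eq ω hn i s
    obtain ⟨l, hl⟩ := hz y (by simp [GammaF4, hy0])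
    exact ⟨l, hl.trans (hyz z)⟩
  choose x hx using hint
  exact ⟨x, funext fun i => funext fun s => hx i s⟩

end Kernel

section Reduction

variable {n m : ℕ}

theorem exists_aD_bD_eq (hn : 2 ≤ n) (a b : Fin m → ZMod 2) :
    ∃ x : Fin m → Fin n → ℤ, ∀ i, aD n m x i = a i ∧ bD n m x i = b i := by
  classical
  refine ⟨fun i => Pi.single ⟨0, by omega⟩ ((a i).val : ℤ) +
    Pi.single ⟨1, by omega⟩ ((b i).val : ℤ), fun i => ⟨?_, ?_⟩⟩ <;>
    simp [aD, bD, Finset.sum_add_distrib, Finset.sum_pi_single']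

theorem toQD_injective : Function.Injective (toQD n m) := fun _ _ h =>
  funext fun i => funext fun j => Int.cast_injective (α := ℚ) (congrFun (congrFun h i) j)

variable {ω : F4} (hω : ω ^ 2 = ω + 1)
include hω

theorem omegaCoord_rhoF4 (x : Fin m → Fin n → ℤ) (i : Fin m) :
    omegaCoord hω 0 (rhoF4 ω n m x i) = aD n m x i ∧
      omegaCoord hω 1 (rhoF4 ω n m x i) = bD n m x i := by
  have h : rhoF4 ω n m x i = aD n m x i • ω + bD n m x i • ω ^ 2 := by
    simp [rhoF4, Algebra.smul_def]
  rw [h]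
  exact omegaCoord_smul_add_smul hω _ _

theorem rhoF4_surjective (hn : 2 ≤ n) : Function.Surjective (rhoF4 ω n m) := by
  intro v
  obtain ⟨x, hx⟩ := exists_aD_bD_eq hn (fun i => omegaCoord hω 0 (v i))
    (fun i => omegaCoord hω 1 (v i))
  refine ⟨x, funext fun i => ?_⟩
  rw [← smul_add_smul_omegaCoord hω (rhoF4 ω n m x i), ← smul_add_smul_omegaCoord hω (v i),
    (omegaCoord_rhoF4 hω x i).1, (omegaCoord_rhoF4 hω x i).2, (hx i).1, (hx i).2]

theorem sympF4_rhoF4 (x y : Fin m → Fin n → ℤ) :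
    sympF4 hω (rhoF4 ω n m x) (rhoF4 ω n m y) =
      ∑ i, (aD n m x i * bD n m y i + aD n m y i * bD n m x i) := by
  simp only [sympF4, omegaCoord_rhoF4 hω]

theorem natCast_wtHF_rhoF4 (x : Fin m → Fin n → ℤ) :
    (wtHF m (rhoF4 ω n m x) : ZMod 2) =
      ∑ i, (aD n m x i + bD n m x i + aD n m x i * bD n m x i) := by
  simp only [natCast_wtHF hω, omegaCoord_rhoF4 hω]

end Reduction

section Duality

variable {m k : ℕ} {ω : F4} (hω : ω ^ 2 = ω + 1)
include hω

theorem exists_intCast_eq_BDev_iff (x y : Fin m → Fin (4 * k) → ℤ) :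
    (∃ l : ℤ, (l : ℚ) = BDev (4 * k) m (toQD _ m x) (toQD _ m y)) ↔
      sympF4 hω (rhoF4 ω (4 * k) m x) (rhoF4 ω (4 * k) m y) = 0 := by
  rw [exists_intCast_eq_iff_of_two_mul_eq (two_mul_BDev_toQD k x y), intCast_twiceBDevInt,
    sympF4_rhoF4 hω]

theorem exists_two_mul_eq_BDev_self_iff (hk : Odd k) (x : Fin m → Fin (4 * k) → ℤ) :
    (∃ l : ℤ, ((2 * l : ℤ) : ℚ) = BDev (4 * k) m (toQD _ m x) (toQD _ m x)) ↔
      2 ∣ wtHF m (rhoF4 ω (4 * k) m x) := by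
  rw [exists_two_mul_eq_iff_of_eq (BDev_toQD_self k x), intCast_normBDevInt hk,
    ← natCast_wtHF_rhoF4 hω, ZMod.natCast_eq_zero_iff]

theorem isIntegralF4_iff_sympF4 (hk : 0 < k) (C : Set (Fin m → F4)) :
    IsIntegralF4 ω (4 * k) m C ↔ ∀ v ∈ C, ∀ w ∈ C, sympF4 hω v w = 0 := by
  have hsurj := rhoF4_surjective hω (m := m) (by omega : 2 ≤ 4 * k)
  simp only [IsIntegralF4, GammaF4, Set.mem_ofPred_eq, exists_intCast_eq_BDev_iff hω,
    hsurj.forall]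

theorem toQD_mem_dualLatticeF4_iff (hk : 0 < k) (C : Submodule F4 (Fin m → F4))
    (x : Fin m → Fin (4 * k) → ℤ) :
    toQD _ m x ∈ dualLatticeF4 ω (4 * k) m C ↔
      rhoF4 ω (4 * k) m x ∈ dualCodeF4 m (conjF4 m '' C) := by
  have hsurj := rhoF4_surjective hω (m := m) (by omega : 2 ≤ 4 * k)
  simp only [dualLatticeF4, GammaF4, Set.mem_ofPred_eq, exists_intCast_eq_BDev_iff hω,
    mem_dualCodeF4_conj_iff hω, hsurj.forall, SetLike.mem_coe]

theorem dualLatticeF4_eq_image (hk : 0 < k) (C : Submodule F4 (Fin m → F4)) :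
    dualLatticeF4 ω (4 * k) m C =
      toQD _ m '' (rhoF4 ω (4 * k) m ⁻¹' dualCodeF4 m (conjF4 m '' C)) := by
  ext z
  constructor
  · intro hz
    obtain ⟨x, rfl⟩ := dualLatticeF4_subset_range_toQD ⟨2 * k, by ring⟩ C hz
    exact ⟨x, (toQD_mem_dualLatticeF4_iff hω hk C x).1 hz, rfl⟩
  · rintro ⟨x, hx, rfl⟩
    exact (toQD_mem_dualLatticeF4_iff hω hk C x).2 hx

theorem isIntegralF4_iff (hk : 0 < k) (C : Submodule F4 (Fin m → F4)) :
    IsIntegralF4 ω (4 * k) m C ↔ (C : Set _) ⊆ dualCodeF4 m (conjF4 m '' C) := by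
  simp only [isIntegralF4_iff_sympF4 hω hk, Set.subset_def, SetLike.mem_coe,
    mem_dualCodeF4_conj_iff hω]

theorem isUnimodularF4_iff (hk : 0 < k) (C : Submodule F4 (Fin m → F4)) :
    IsUnimodularF4 ω (4 * k) m C ↔ IsHermitianSelfDualF4 m C := by
  have hsurj := rhoF4_surjective hω (m := m) (by omega : 2 ≤ 4 * k)
  rw [IsUnimodularF4, IsHermitianSelfDualF4, dualLatticeF4_eq_image hω hk, GammaF4,
    ← Set.preimage_ofPred_eq, (Set.image_injective.2 toQD_injective).eq_iff,
    (Set.preimage_injective.2 hsurj).eq_iff, eq_comm]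
  rfl

theorem isEvenLatF4_iff (hk : Odd k) (C : Submodule F4 (Fin m → F4)) :
    IsEvenLatF4 ω (4 * k) m C ↔ ∀ w ∈ C, 2 ∣ wtHF m w := by
  have hsurj := rhoF4_surjective hω (m := m) (by have := hk.pos; omega : 2 ≤ 4 * k)
  have hnorm : (∀ x ∈ GammaF4 ω (4 * k) m C,
      ∃ l : ℤ, ((2 * l : ℤ) : ℚ) = BDev (4 * k) m (toQD _ m x) (toQD _ m x)) ↔
      ∀ w ∈ C, 2 ∣ wtHF m w := by
    simp only [GammaF4, Set.mem_ofPred_eq, exists_two_mul_eq_BDev_self_iff hω hk, hsurj.forall,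
      SetLike.mem_coe]
  rw [IsEvenLatF4, hnorm, isIntegralF4_iff_sympF4 hω hk.pos, and_iff_right_iff_imp]
  intro hwt v hv w hw
  have h := natCast_wtHF_add hω v w
  rw [(ZMod.natCast_eq_zero_iff _ 2).2 (hwt _ (C.add_mem hv hw)),
    (ZMod.natCast_eq_zero_iff _ 2).2 (hwt v hv), (ZMod.natCast_eq_zero_iff _ 2).2 (hwt w hw)] at h
  simpa using h.symm

theorem two_dvd_wtHF_of_subset_dualCodeF4_conj (C : Submodule F4 (Fin m → F4))
    (hC : (C : Set _) ⊆ dualCodeF4 m (conjF4 m '' C)) {w : Fin m → F4} (hw : w ∈ C) :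
    2 ∣ wtHF m w := by
  rw [← ZMod.natCast_eq_zero_iff, ← sympF4_smul_self hω]
  exact (mem_dualCodeF4_conj_iff hω C w).1 (hC hw) _ (C.smul_mem ω hw)

end Duality

theorem stmt14_general (n m : ℕ) (hn4 : 4 ∣ n) (hn8 : ¬ (8 ∣ n))
    (ω : F4) (hω : ω ^ 2 = ω + 1)
    (C : Submodule F4 (Fin m → F4)) :
    (IsIntegralF4 ω n m (C : Set _) ↔
        (C : Set _) ⊆ dualCodeF4 m (conjF4 m '' (C : Set _))) ∧
    (IsUnimodularF4 ω n m (C : Set _) ↔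
        IsHermitianSelfDualF4 m (C : Set _)) ∧
    (IsEvenLatF4 ω n m (C : Set _) ↔ ∀ w ∈ C, 2 ∣ wtHF m w) ∧
    ((IsEvenLatF4 ω n m (C : Set _) ∧ IsUnimodularF4 ω n m (C : Set _)) ↔
        IsHermitianSelfDualF4 m (C : Set _)) := by
  obtain ⟨k, rfl⟩ := hn4
  have hk : Odd k := Nat.odd_iff.2 (by omega)
  have hunimod := isUnimodularF4_iff hω hk.pos C
  refine ⟨isIntegralF4_iff hω hk.pos C, hunimod, isEvenLatF4_iff hω hk C,
    fun h => hunimod.1 h.2, fun hsd => ⟨?_, hunimod.2 hsd⟩⟩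
  exact (isEvenLatF4_iff hω hk C).2 fun w hw =>
    two_dvd_wtHF_of_subset_dualCodeF4_conj hω C hsd.subset hw

theorem stmt14 (n m : ℕ) (hn : 4 ≤ n) (hn4 : 4 ∣ n) (hn8 : ¬ (8 ∣ n))
    (hm : 0 < m) (ω : F4) (hω : ω ^ 2 = ω + 1)
    (C : Submodule F4 (Fin m → F4)) :
    (IsIntegralF4 ω n m (C : Set _) ↔
        (C : Set _) ⊆ dualCodeF4 m (conjF4 m '' (C : Set _))) ∧
    (IsUnimodularF4 ω n m (C : Set _) ↔
        IsHermitianSelfDualF4 m (C : Set _)) ∧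
    (IsEvenLatF4 ω n m (C : Set _) ↔ ∀ w ∈ C, 2 ∣ wtHF m w) ∧
    ((IsEvenLatF4 ω n m (C : Set _) ∧ IsUnimodularF4 ω n m (C : Set _)) ↔
        IsHermitianSelfDualF4 m (C : Set _)) :=
  stmt14_general n m hn4 hn8 ω hω C
end

section
/- Let m be a positive integer and x, y : Fin m → Fin 6 → ℤ. Then B(x,y) ∈ ℤ if and only if ρ(x)·ρ(y) = 0 in ZMod 3, and B(x,x) ∈ 2ℤ if and only if ρ(x)·ρ(x) = 0 in ZMod 3. -/
open Finset

/-- The Gram matrix of the dual basis of the `E₆` root lattice, times 3. -/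
def ME6 : Fin 6 → Fin 6 → ℚ :=
  ![![4, 1, 1, 2, -1, -1],
    ![1, 4, 1, 2, 2, -1],
    ![1, 1, 4, 2, 2, 2],
    ![2, 2, 2, 4, 1, 1],
    ![-1, 2, 2, 1, 4, 1],
    ![-1, -1, 2, 1, 1, 4]]

/-- The bilinear form of `m` copies of the dual `E₆` root lattice,
written in the dual basis. -/
noncomputable def BE6 (m : ℕ) (x y : Fin m → Fin 6 → ℚ) : ℚ :=
  ∑ i, ∑ j : Fin 6, ∑ s : Fin 6, (1 / 3) * ME6 j s * x i j * y i s

/-- The reduction map to `(ℤ/3ℤ)^m`. -/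
def rhoE6 (m : ℕ) (x : Fin m → Fin 6 → ℤ) : Fin m → ZMod 3 :=
  fun i => ((x i 0 + x i 1 + x i 2 - x i 3 - x i 4 - x i 5 : ℤ) : ZMod 3)

def NE6 : Fin 6 → Fin 6 → ℤ :=
  ![![4, 1, 1, 2, -1, -1],
    ![1, 4, 1, 2, 2, -1],
    ![1, 1, 4, 2, 2, 2],
    ![2, 2, 2, 4, 1, 1],
    ![-1, 2, 2, 1, 4, 1],
    ![-1, -1, 2, 1, 1, 4]]

lemma ME6_eq : ∀ j s, ME6 j s = ((NE6 j s : ℤ) : ℚ) := by decide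

def TE6 (a b : Fin 6 → ℤ) : ℤ := (4) * a 0 * b 0 + (1) * a 0 * b 1 + (1) * a 0 * b 2 + (2) * a 0 * b 3 + (-1) * a 0 * b 4 + (-1) * a 0 * b 5 + (1) * a 1 * b 0 + (4) * a 1 * b 1 + (1) * a 1 * b 2 + (2) * a 1 * b 3 + (2) * a 1 * b 4 + (-1) * a 1 * b 5 + (1) * a 2 * b 0 + (1) * a 2 * b 1 + (4) * a 2 * b 2 + (2) * a 2 * b 3 + (2) * a 2 * b 4 + (2) * a 2 * b 5 + (2) * a 3 * b 0 + (2) * a 3 * b 1 + (2) * a 3 * b 2 + (4) * a 3 * b 3 + (1) * a 3 * b 4 + (1) * a 3 * b 5 + (-1) * a 4 * b 0 + (2) * a 4 * b 1 + (2) * a 4 * b 2 + (1) * a 4 * b 3 + (4) * a 4 * b 4 + (1) * a 4 * b 5 + (-1) * a 5 * b 0 + (-1) * a 5 * b 1 + (2) * a 5 * b 2 + (1) * a 5 * b 3 + (1) * a 5 * b 4 + (4) * a 5 * b 5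

lemma sum_eq_TE6 (a b : Fin 6 → ℤ) :
    ∑ j : Fin 6, ∑ s : Fin 6, NE6 j s * a j * b s = TE6 a b := by
  simp only [Fin.sum_univ_six, show NE6 0 0 = 4 from rfl, show NE6 0 1 = 1 from rfl, show NE6 0 2 = 1 from rfl, show NE6 0 3 = 2 from rfl, show NE6 0 4 = -1 from rfl, show NE6 0 5 = -1 from rfl, show NE6 1 0 = 1 from rfl, show NE6 1 1 = 4 from rfl, show NE6 1 2 = 1 from rfl, show NE6 1 3 = 2 from rfl, show NE6 1 4 = 2 from rfl, show NE6 1 5 = -1 from rfl, show NE6 2 0 = 1 from rfl, show NE6 2 1 = 1 from rfl, show NE6 2 2 = 4 from rfl, show NE6 2 3 = 2 from rfl, show NE6 2 4 = 2 from rfl, show NE6 2 5 = 2 from rfl, show NE6 3 0 = 2 from rfl, show NE6 3 1 = 2 from rfl, show NE6 3 2 = 2 from rfl, show NE6 3 3 = 4 from rfl, show NE6 3 4 = 1 from rfl, show NE6 3 5 = 1 from rfl, show NE6 4 0 = -1 from rfl, show NE6 4 1 = 2 from rfl, show NE6 4 2 = 2 from rfl, show NE6 4 3 = 1 from rfl,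 show NE6 4 4 = 4 from rfl, show NE6 4 5 = 1 from rfl, show NE6 5 0 = -1 from rfl, show NE6 5 1 = -1 from rfl, show NE6 5 2 = 2 from rfl, show NE6 5 3 = 1 from rfl, show NE6 5 4 = 1 from rfl, show NE6 5 5 = 4 from rfl, TE6]
  ring

lemma TE6_key (a b : Fin 6 → ℤ) :
    TE6 a b = (a 0 + a 1 + a 2 - a 3 - a 4 - a 5) * (b 0 + b 1 + b 2 - b 3 - b 4 - b 5)
      + 3 * (a 0 * (b 0 + b 3) + a 1 * (b 1 + b 3 + b 4) + a 2 * (b 2 + b 3 + b 4 + b 5)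
           + a 3 * (b 0 + b 1 + b 2 + b 3) + a 4 * (b 1 + b 2 + b 4) + a 5 * (b 2 + b 5)) := by
  simp only [TE6]; ring

lemma TE6_even (a : Fin 6 → ℤ) : 2 ∣ TE6 a a := by
  refine ⟨2*(a 0^2 + a 1^2 + a 2^2 + a 3^2 + a 4^2 + a 5^2)
    + a 0*a 1 + a 0*a 2 + 2*a 0*a 3 - a 0*a 4 - a 0*a 5
    + a 1*a 2 + 2*a 1*a 3 + 2*a 1*a 4 - a 1*a 5
    + 2*a 2*a 3 + 2*a 2*a 4 + 2*a 2*a 5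
    + a 3*a 4 + a 3*a 5 + a 4*a 5, ?_⟩
  simp only [TE6]; ring

lemma TE6_mod3 (a b : Fin 6 → ℤ) :
    ((TE6 a b : ℤ) : ZMod 3)
      = ((a 0 + a 1 + a 2 - a 3 - a 4 - a 5 : ℤ) : ZMod 3)
        * ((b 0 + b 1 + b 2 - b 3 - b 4 - b 5 : ℤ) : ZMod 3) := by
  rw [TE6_key]
  push_cast
  have h3 : (3 : ZMod 3) = 0 := by decide
  rw [h3]
  ring

lemma inner_eq (a b : Fin 6 → ℤ) :
    ∑ j : Fin 6, ∑ s : Fin 6, (1/3 : ℚ) * ME6 j s * (a j : ℚ) * (b s : ℚ)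
      = ((TE6 a b : ℤ) : ℚ) / 3 := by
  rw [← sum_eq_TE6]
  push_cast
  rw [Finset.sum_div]
  refine Finset.sum_congr rfl fun j _ => ?_
  rw [Finset.sum_div]
  refine Finset.sum_congr rfl fun s _ => ?_
  rw [ME6_eq]
  push_cast
  ring

lemma BE6_eq (m : ℕ) (x y : Fin m → Fin 6 → ℤ) :
    BE6 m (fun i j => (x i j : ℚ)) (fun i j => (y i j : ℚ))
      = ((∑ i, TE6 (x i) (y i) : ℤ) : ℚ) / 3 := by
  unfold BE6
  rw [Finset.sum_congr rfl fun i _ => inner_eq (x i) (y i), ← Finset.sum_div]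
  push_cast
  ring

lemma sum_mod3 (m : ℕ) (x y : Fin m → Fin 6 → ℤ) :
    ((∑ i, TE6 (x i) (y i) : ℤ) : ZMod 3) = ∑ i, rhoE6 m x i * rhoE6 m y i := by
  push_cast
  exact Finset.sum_congr rfl fun i _ => TE6_mod3 (x i) (y i)

theorem stmt17 (m : ℕ) (hm : 0 < m) (x y : Fin m → Fin 6 → ℤ) :
    ((∃ k : ℤ, (k : ℚ) =
        BE6 m (fun i j => (x i j : ℚ)) (fun i j => (y i j : ℚ))) ↔
      ∑ i, rhoE6 m x i * rhoE6 m y i = 0) ∧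
    ((∃ k : ℤ, ((2 * k : ℤ) : ℚ) =
        BE6 m (fun i j => (x i j : ℚ)) (fun i j => (x i j : ℚ))) ↔
      ∑ i, rhoE6 m x i * rhoE6 m x i = 0) := by
  constructor
  · rw [BE6_eq, ← sum_mod3, ZMod.intCast_zmod_eq_zero_iff_dvd]
    simp only [Nat.cast_ofNat]
    set S : ℤ := ∑ i, TE6 (x i) (y i) with hS
    constructor
    · rintro ⟨k, hk⟩
      rw [eq_div_iff (by norm_num : (3:ℚ) ≠ 0)] at hk
      refine ⟨k, ?_⟩
      have : (k : ℚ) * 3 = (S : ℚ) := hk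
      exact_mod_cast (by linarith : (S : ℚ) = 3 * k)
    · rintro ⟨k, hk⟩
      exact ⟨k, by rw [hk]; push_cast; ring⟩
  · rw [BE6_eq, ← sum_mod3, ZMod.intCast_zmod_eq_zero_iff_dvd]
    simp only [Nat.cast_ofNat]
    set S : ℤ := ∑ i, TE6 (x i) (x i) with hS
    have h2 : 2 ∣ S := Finset.dvd_sum fun i _ => TE6_even (x i)
    constructor
    · rintro ⟨k, hk⟩
      rw [eq_div_iff (by norm_num : (3:ℚ) ≠ 0)] at hk
      have : ((2*k : ℤ) : ℚ) * 3 = (S : ℚ) := hk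
      have h6 : S = 6 * k := by exact_mod_cast (by push_cast at this ⊢; linarith : (S : ℚ) = 6 * k)
      exact ⟨2 * k, by omega⟩
    · rintro ⟨k, hk⟩
      obtain ⟨l, hl⟩ := h2
      obtain ⟨k6, hk6⟩ : (6:ℤ) ∣ S := by omega
      exact ⟨k6, by rw [hk6]; push_cast; ring⟩
end

section
/- Let m be a positive integer and C a code of length m over ℤ/3ℤ. Then: (1) Γ_C is integral if and only if C ⊆ C^⊥; (2) Γ_C is unimodular if and only if C = C^⊥; (3) Γ_C is even if and only if C ⊆ C^⊥; (4) Γ_C is even unimodular if and only if C = C^⊥ (C is Euclidean self-dual). -/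
open Finset

/-- The dual code of a set of codewords over `ℤ/3ℤ`. -/
def dualCode3 (m : ℕ) (C : Set (Fin m → ZMod 3)) : Set (Fin m → ZMod 3) :=
  {u | ∀ v ∈ C, ∑ i, u i * v i = 0}

/-- The lattice `Γ_C` constructed from the code `C`. -/
def GammaE6 (m : ℕ) (C : Set (Fin m → ZMod 3)) : Set (Fin m → Fin 6 → ℤ) :=
  {x | rhoE6 m x ∈ C}

/-- Coercion of an integral vector to a rational vector. -/
def toQE6 (m : ℕ) (x : Fin m → Fin 6 → ℤ) : Fin m → Fin 6 → ℚ :=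
  fun i j => (x i j : ℚ)

/-- The dual lattice `Γ_C^*`, taken inside the `ℚ`-valued vectors. -/
noncomputable def dualLatticeE6 (m : ℕ) (C : Set (Fin m → ZMod 3)) :
    Set (Fin m → Fin 6 → ℚ) :=
  {z | ∀ y ∈ GammaE6 m C, ∃ k : ℤ, (k : ℚ) = BE6 m z (toQE6 m y)}

/-- `Γ_C` is integral. -/
def IsIntegralE6 (m : ℕ) (C : Set (Fin m → ZMod 3)) : Prop :=
  ∀ x ∈ GammaE6 m C, ∀ y ∈ GammaE6 m C,
    ∃ k : ℤ, (k : ℚ) = BE6 m (toQE6 m x) (toQE6 m y)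

/-- `Γ_C` is even. -/
def IsEvenLatE6 (m : ℕ) (C : Set (Fin m → ZMod 3)) : Prop :=
  IsIntegralE6 m C ∧ ∀ x ∈ GammaE6 m C,
    ∃ k : ℤ, ((2 * k : ℤ) : ℚ) = BE6 m (toQE6 m x) (toQE6 m x)

/-- `Γ_C` is unimodular. -/
def IsUnimodularE6 (m : ℕ) (C : Set (Fin m → ZMod 3)) : Prop :=
  dualLatticeE6 m C = toQE6 m '' GammaE6 m C

/-! ### Auxiliary machinery -/

lemma cvE0 {α : Type*} (a b c d e f : α) : ![a,b,c,d,e,f] 0 = a := rfl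
lemma cvE1 {α : Type*} (a b c d e f : α) : ![a,b,c,d,e,f] 1 = b := rfl
lemma cvE2 {α : Type*} (a b c d e f : α) : ![a,b,c,d,e,f] 2 = c := rfl
lemma cvE3 {α : Type*} (a b c d e f : α) : ![a,b,c,d,e,f] 3 = d := rfl
lemma cvE4 {α : Type*} (a b c d e f : α) : ![a,b,c,d,e,f] 4 = e := rfl
lemma cvE5 {α : Type*} (a b c d e f : α) : ![a,b,c,d,e,f] 5 = f := rfl

/-- Integer version of `ME6`. -/
def MZ6 : Fin 6 → Fin 6 → ℤ :=
  ![![4, 1, 1, 2, -1, -1],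
    ![1, 4, 1, 2, 2, -1],
    ![1, 1, 4, 2, 2, 2],
    ![2, 2, 2, 4, 1, 1],
    ![-1, 2, 2, 1, 4, 1],
    ![-1, -1, 2, 1, 1, 4]]

/-- Integer version of the bilinear form (times 3). -/
def BintE6 (m : ℕ) (x y : Fin m → Fin 6 → ℤ) : ℤ :=
  ∑ i, ∑ j : Fin 6, ∑ s : Fin 6, MZ6 j s * x i j * y i s

lemma MZ6_cast (j s : Fin 6) : ((MZ6 j s : ℤ) : ℚ) = ME6 j s := by
  fin_cases j <;> fin_cases s <;> norm_num [MZ6, ME6]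

lemma BE6_toQ (m : ℕ) (x y : Fin m → Fin 6 → ℤ) :
    BE6 m (toQE6 m x) (toQE6 m y) = (BintE6 m x y : ℚ) / 3 := by
  unfold BE6 BintE6 toQE6
  push_cast [MZ6_cast]
  rw [Finset.sum_div]
  refine Finset.sum_congr rfl fun i _ => ?_
  rw [Finset.sum_div]
  refine Finset.sum_congr rfl fun j _ => ?_
  rw [Finset.sum_div]
  refine Finset.sum_congr rfl fun s _ => ?_
  ring

lemma block_identity (x y : Fin 6 → ℤ) :
    (∑ j : Fin 6, ∑ s : Fin 6, MZ6 j s * x j * y s : ℤ) =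
      (x 0 + x 1 + x 2 - x 3 - x 4 - x 5) * (y 0 + y 1 + y 2 - y 3 - y 4 - y 5)
      + 3 * (x 0 * (y 0 + y 3) + x 1 * (y 1 + y 3 + y 4)
        + x 2 * (y 2 + y 3 + y 4 + y 5) + x 3 * (y 0 + y 1 + y 2 + y 3)
        + x 4 * (y 1 + y 2 + y 4) + x 5 * (y 2 + y 5)) := by
  simp only [Fin.sum_univ_six, MZ6, cvE0, cvE1, cvE2, cvE3, cvE4, cvE5]
  ring

lemma block_mod (x y : Fin 6 → ℤ) :
    ((∑ j : Fin 6, ∑ s : Fin 6, MZ6 j s * x j * y s : ℤ) : ZMod 3) =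
      ((x 0 + x 1 + x 2 - x 3 - x 4 - x 5 : ℤ) : ZMod 3) *
      ((y 0 + y 1 + y 2 - y 3 - y 4 - y 5 : ℤ) : ZMod 3) := by
  rw [block_identity]
  push_cast
  rw [show ((3 : ZMod 3)) = 0 by decide]
  ring

lemma block_even (x : Fin 6 → ℤ) :
    (∑ j : Fin 6, ∑ s : Fin 6, MZ6 j s * x j * x s : ℤ) =
      2 * (2*(x 0^2 + x 1^2 + x 2^2 + x 3^2 + x 4^2 + x 5^2)
        + x 0*x 1 + x 0*x 2 + 2*x 0*x 3 - x 0*x 4 - x 0*x 5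
        + x 1*x 2 + 2*x 1*x 3 + 2*x 1*x 4 - x 1*x 5
        + 2*x 2*x 3 + 2*x 2*x 4 + 2*x 2*x 5
        + x 3*x 4 + x 3*x 5 + x 4*x 5) := by
  simp only [Fin.sum_univ_six, MZ6, cvE0, cvE1, cvE2, cvE3, cvE4, cvE5]
  ring

lemma Bint_cast_zmod (m : ℕ) (x y : Fin m → Fin 6 → ℤ) :
    ((BintE6 m x y : ℤ) : ZMod 3) = ∑ i, rhoE6 m x i * rhoE6 m y i := by
  unfold BintE6 rhoE6
  push_cast
  exact Finset.sum_congr rfl fun i _ => by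
    have h := block_mod (x i) (y i)
    push_cast at h
    exact h

lemma int_iff (m : ℕ) (x y : Fin m → Fin 6 → ℤ) :
    (∃ k : ℤ, (k : ℚ) = BE6 m (toQE6 m x) (toQE6 m y)) ↔
      ∑ i, rhoE6 m x i * rhoE6 m y i = 0 := by
  rw [BE6_toQ, ← Bint_cast_zmod]
  constructor
  · rintro ⟨k, hk⟩
    have he : BintE6 m x y = 3 * k := by
      have : (BintE6 m x y : ℚ) = 3 * (k : ℚ) := by
        field_simp at hk; linarith
      exact_mod_cast this
    rw [he]
    push_cast
    rw [show ((3 : ZMod 3)) = 0 by decide]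
    ring
  · intro h
    have : (3 : ℤ) ∣ BintE6 m x y := by
      rwa [ZMod.intCast_zmod_eq_zero_iff_dvd] at h
    obtain ⟨k, hk⟩ := this
    exact ⟨k, by rw [hk]; push_cast; ring⟩

lemma rho_lift (m : ℕ) (u : Fin m → ZMod 3) :
    ∃ x : Fin m → Fin 6 → ℤ, rhoE6 m x = u := by
  refine ⟨fun i => ![((u i).val : ℤ), 0, 0, 0, 0, 0], funext fun i => ?_⟩
  unfold rhoE6
  simp only [cvE0, cvE1, cvE2, cvE3, cvE4, cvE5]
  push_cast
  simp [ZMod.natCast_val, ZMod.cast_id]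

lemma toQ_inj (m : ℕ) : Function.Injective (toQE6 m) := by
  intro a b hab
  funext i j
  have : ((a i j : ℤ) : ℚ) = ((b i j : ℤ) : ℚ) := congrFun (congrFun hab i) j
  exact_mod_cast this

/-- pairing with a single-block integer vector. -/
lemma pair_single (m : ℕ) (z : Fin m → Fin 6 → ℚ) (i : Fin m) (g : Fin 6 → ℤ) :
    BE6 m z (toQE6 m (fun i' => if i' = i then g else 0)) =
      ∑ j : Fin 6, ∑ s : Fin 6, (1 / 3) * ME6 j s * z i j * (g s : ℚ) := by
  unfold BE6 toQE6
  rw [Finset.sum_eq_single_of_mem i (Finset.mem_univ i)]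
  · simp
  · intro b _ hb
    simp [hb]

lemma rho_single_zero (m : ℕ) (i : Fin m) (g : Fin 6 → ℤ)
    (hg : ((g 0 + g 1 + g 2 - g 3 - g 4 - g 5 : ℤ) : ZMod 3) = 0) :
    rhoE6 m (fun i' => if i' = i then g else 0) = 0 := by
  funext i'
  unfold rhoE6
  by_cases h : i' = i
  · simp [h, hg]
  · simp [h]

lemma pair_int (m : ℕ) (C : Set (Fin m → ZMod 3)) (h0 : (0 : Fin m → ZMod 3) ∈ C)
    (z : Fin m → Fin 6 → ℚ) (hz : z ∈ dualLatticeE6 m C) (i : Fin m) (g : Fin 6 → ℤ)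
    (hg : ((g 0 + g 1 + g 2 - g 3 - g 4 - g 5 : ℤ) : ZMod 3) = 0) :
    ∃ k : ℤ, (k : ℚ) = ∑ j : Fin 6, ∑ s : Fin 6, (1 / 3) * ME6 j s * z i j * (g s : ℚ) := by
  obtain ⟨k, hk⟩ := hz (fun i' => if i' = i then g else 0)
    (by show rhoE6 m _ ∈ C; rw [rho_single_zero m i g hg]; exact h0)
  exact ⟨k, by rw [hk, pair_single]⟩

/-- Every element of the dual lattice is integer valued. -/
lemma dual_integral (m : ℕ) (C : Set (Fin m → ZMod 3)) (h0 : (0 : Fin m → ZMod 3) ∈ C)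
    (z : Fin m → Fin 6 → ℚ) (hz : z ∈ dualLatticeE6 m C) :
    ∃ x : Fin m → Fin 6 → ℤ, toQE6 m x = z := by
  have key : ∀ i j, ∃ n : ℤ, (n : ℚ) = z i j := by
    intro i j
    obtain ⟨k1, hk1⟩ := pair_int m C h0 z hz i ![1,-1,0,0,0,0] (by decide)
    obtain ⟨k2, hk2⟩ := pair_int m C h0 z hz i ![0,1,-1,0,0,0] (by decide)
    obtain ⟨k3, hk3⟩ := pair_int m C h0 z hz i ![0,0,1,1,0,0] (by decide)
    obtain ⟨k4, hk4⟩ := pair_int m C h0 z hz i ![0,0,0,1,-1,0] (by decide)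
    obtain ⟨k5, hk5⟩ := pair_int m C h0 z hz i ![0,0,0,0,1,-1] (by decide)
    obtain ⟨k6, hk6⟩ := pair_int m C h0 z hz i ![0,0,0,0,0,3] (by decide)
    simp only [Fin.sum_univ_six, ME6, cvE0, cvE1, cvE2, cvE3, cvE4, cvE5] at hk1 hk2 hk3 hk4 hk5 hk6
    push_cast at hk1 hk2 hk3 hk4 hk5 hk6
    fin_cases j
    · exact ⟨2*k1 + 2*k2 + k3 - 2*k4 - k5, by push_cast; linear_combination 2*hk1 + 2*hk2 + hk3 - 2*hk4 - hk5⟩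
    · exact ⟨2*k2 + 2*k3 - 3*k4 - 4*k5 - k6, by push_cast; linear_combination 2*hk2 + 2*hk3 - 3*hk4 - 4*hk5 - hk6⟩
    · exact ⟨-k1 - k2 + k3 - k4 - 2*k5 - k6, by push_cast; linear_combination -hk1 - hk2 + hk3 - hk4 - 2*hk5 - hk6⟩
    · exact ⟨-k1 - 2*k2 - 2*k3 + 4*k4 + 4*k5 + k6, by push_cast; linear_combination -hk1 - 2*hk2 - 2*hk3 + 4*hk4 + 4*hk5 + hk6⟩
    · exact ⟨k1 - k3 + k4 + 3*k5 + k6, by push_cast; linear_combination hk1 - hk3 + hk4 + 3*hk5 + hk6⟩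
    · exact ⟨k1 + 2*k2 + k3 - 2*k4 - 2*k5, by push_cast; linear_combination hk1 + 2*hk2 + hk3 - 2*hk4 - 2*hk5⟩
  obtain ⟨x, hx⟩ : ∃ x : Fin m → Fin 6 → ℤ, ∀ i j, ((x i j : ℤ) : ℚ) = z i j := by
    choose x hx using key
    exact ⟨x, hx⟩
  exact ⟨x, funext fun i => funext fun j => hx i j⟩

/-- The dual lattice is the image of the lattice of the dual code. -/
lemma dual_eq (m : ℕ) (C : Set (Fin m → ZMod 3)) (h0 : (0 : Fin m → ZMod 3) ∈ C) :
    dualLatticeE6 m C = toQE6 m '' GammaE6 m (dualCode3 m C) := by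
  ext z
  constructor
  · intro hz
    obtain ⟨x, hx⟩ := dual_integral m C h0 z hz
    refine ⟨x, ?_, hx⟩
    intro v hv
    obtain ⟨y, hy⟩ := rho_lift m v
    have hyC : y ∈ GammaE6 m C := by show rhoE6 m y ∈ C; rw [hy]; exact hv
    have := hz (y) hyC
    rw [← hx] at this
    rw [← hy]
    exact (int_iff m x y).mp this
  · rintro ⟨x, hx, rfl⟩
    intro y hy
    rw [int_iff m x y]
    exact hx (rhoE6 m y) hy

lemma Gamma_eq_iff (m : ℕ) (C D : Set (Fin m → ZMod 3)) :
    GammaE6 m C = GammaE6 m D ↔ C = D := by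
  constructor
  · intro h
    ext u
    obtain ⟨x, hx⟩ := rho_lift m u
    constructor
    · intro hu
      have : x ∈ GammaE6 m C := by show rhoE6 m x ∈ C; rw [hx]; exact hu
      rw [h] at this
      rwa [← hx]
    · intro hu
      have : x ∈ GammaE6 m D := by show rhoE6 m x ∈ D; rw [hx]; exact hu
      rw [← h] at this
      rwa [← hx]
  · intro h; rw [h]

theorem stmt18 (m : ℕ) (hm : 0 < m)
    (C : Submodule (ZMod 3) (Fin m → ZMod 3)) :
    (IsIntegralE6 m (C : Set _) ↔ (C : Set _) ⊆ dualCode3 m (C : Set _)) ∧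
    (IsUnimodularE6 m (C : Set _) ↔ (C : Set _) = dualCode3 m (C : Set _)) ∧
    (IsEvenLatE6 m (C : Set _) ↔ (C : Set _) ⊆ dualCode3 m (C : Set _)) ∧
    ((IsEvenLatE6 m (C : Set _) ∧ IsUnimodularE6 m (C : Set _)) ↔
        (C : Set _) = dualCode3 m (C : Set _)) := by
  have h0 : (0 : Fin m → ZMod 3) ∈ (C : Set _) := C.zero_mem
  -- Part 1
  have part1 : IsIntegralE6 m (C : Set _) ↔ (C : Set _) ⊆ dualCode3 m (C : Set _) := by
    constructor
    · intro h u hu v hv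
      obtain ⟨x, hx⟩ := rho_lift m u
      obtain ⟨y, hy⟩ := rho_lift m v
      have hxC : x ∈ GammaE6 m (C : Set _) := by show rhoE6 m x ∈ (C : Set (Fin m → ZMod 3)); rw [hx]; exact hu
      have hyC : y ∈ GammaE6 m (C : Set _) := by show rhoE6 m y ∈ (C : Set (Fin m → ZMod 3)); rw [hy]; exact hv
      have := (int_iff m x y).mp (h x hxC y hyC)
      rwa [hx, hy] at this
    · intro h x hx y hy
      rw [int_iff m x y]
      exact h hx (rhoE6 m y) hy
  -- evenness from integrality
  have even_of_sub : (C : Set _) ⊆ dualCode3 m (C : Set _) → IsEvenLatE6 m (C : Set _) := by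
    intro h
    refine ⟨part1.mpr h, fun x hx => ?_⟩
    obtain ⟨k, hk⟩ := part1.mpr h x hx x hx
    have h3k : 3 * k = BintE6 m x x := by
      have : (k : ℚ) = (BintE6 m x x : ℚ) / 3 := by rw [hk, BE6_toQ]
      have h2 : ((3 * k : ℤ) : ℚ) = ((BintE6 m x x : ℤ) : ℚ) := by push_cast; field_simp at this; linarith
      exact_mod_cast h2
    have heven : ∃ a : ℤ, BintE6 m x x = 2 * a := by
      have hb : ∀ i : Fin m, ∃ a : ℤ, (∑ j : Fin 6, ∑ s : Fin 6, MZ6 j s * x i j * x i s) = 2 * a :=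
        fun i => ⟨_, block_even (x i)⟩
      choose a ha using hb
      exact ⟨∑ i, a i, by unfold BintE6; rw [Finset.mul_sum]; exact Finset.sum_congr rfl fun i _ => ha i⟩
    obtain ⟨a, ha⟩ := heven
    have hk2 : 2 ∣ k := by omega
    obtain ⟨k', hk'⟩ := hk2
    exact ⟨k', by rw [hk'] at hk; exact hk⟩
  -- Part 2
  have part2 : IsUnimodularE6 m (C : Set _) ↔ (C : Set _) = dualCode3 m (C : Set _) := by
    unfold IsUnimodularE6
    rw [dual_eq m (C : Set _) h0]
    constructor
    · intro h
      exact ((Gamma_eq_iff m _ _).mp (toQ_inj m |>.image_injective h)).symm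
    · intro h
      rw [← h]
  refine ⟨part1, part2, ?_, ?_⟩
  · constructor
    · intro h; exact part1.mp h.1
    · exact even_of_sub
  · constructor
    · intro h; exact part2.mp h.2
    · intro h; exact ⟨even_of_sub (h ▸ subset_rfl), part2.mpr h⟩
end
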